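/- arXiv:1801.07754 — 2 statements merged into one kernel-verified Lean document; each statement's English description precedes it below -/
import Mathlib

section
/- Let p be a prime and suppose r = b + s·p^t·(p−1) with t ≥ 1. Then for any integers i, m with 0 ≤ i, m and m ≤ p−1, the difference of binomial coefficients C(b−i, m) − C(r−i, m) is divisible by p^t in Z_p (indeed (C(b−i,m) − C(r−i,m)) ∈ (r−b)/m! · Z, which lies in (r−b)·Z_p since m! is prime to p for m ≤ p−1). -/
/-! Since `descPochhammer ℤ m` is a polynomial with integer coefficients, `a - b` divides
`m! (C(a,m) - C(b,m)) = a(a-1)⋯(a-m+1) - b(b-1)⋯(b-m+1)`. For `m < p` the factor `m!` is prime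
to `p`, and `(b - i) - (r - i) = -s (p - 1) p^t`. -/

theorem Int.sub_dvd_descFactorial_sub (a b m : ℕ) :
    ((a : ℤ) - b) ∣ (a.descFactorial m : ℤ) - b.descFactorial m := by
  simpa only [descPochhammer_eval_eq_descFactorial] using
    Polynomial.sub_dvd_eval_sub (a : ℤ) b (descPochhammer ℤ m)

theorem Int.dvd_choose_sub_of_dvd_sub {n : ℤ} {a b m : ℕ} (hn : IsCoprime n m.factorial)
    (h : n ∣ (a : ℤ) - b) : n ∣ (a.choose m : ℤ) - b.choose m := by
  refine hn.dvd_of_dvd_mul_left ?_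
  simpa only [Nat.descFactorial_eq_factorial_mul_choose, Nat.cast_mul, mul_sub] using
    h.trans (Int.sub_dvd_descFactorial_sub a b m)

theorem Nat.Prime.coprime_pow_factorial {p m : ℕ} (hp : p.Prime) (hm : m < p) (t : ℕ) :
    Nat.Coprime (p ^ t) m.factorial :=
  ((hp.coprime_iff_not_dvd).2 (by rw [hp.dvd_factorial]; omega)).pow_left t

theorem stmt9_general (p b s t r i m : ℕ) (hp : p.Prime)
    (hr : r = b + s * p ^ t * (p - 1)) (hm : m ≤ p - 1)
    (hib : i ≤ b) :
    (p : ℤ) ^ t ∣ ((b - i).choose m : ℤ) - ((r - i).choose m : ℤ) := by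
  have hcop : IsCoprime ((p : ℤ) ^ t) (m.factorial : ℤ) := by
    rw [← Nat.cast_pow, Nat.isCoprime_iff_coprime]
    exact hp.coprime_pow_factorial (by have := hp.two_le; omega) t
  apply Int.dvd_choose_sub_of_dvd_sub hcop
  have hdiff : ((b - i : ℕ) : ℤ) - ((r - i : ℕ) : ℤ) = -(s * ((p - 1 : ℕ) : ℤ)) * p ^ t := by
    rw [hr, Nat.cast_sub hib, Nat.cast_sub (by omega)]
    push_cast
    ring
  rw [hdiff]
  exact dvd_mul_left _ _

/-- If `r = b + s p^t (p-1)` with `t ≥ 1` and `m ≤ p-1`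
(with `m ≤ b-i`, `m ≤ r-i`, `i ≤ b`), then `p^t` divides
`C(b-i,m) - C(r-i,m)`. -/
theorem stmt9 (p b s t r i m : ℕ) (hp : p.Prime) (ht : 1 ≤ t)
    (hr : r = b + s * p ^ t * (p - 1)) (hm : m ≤ p - 1)
    (hib : i ≤ b) (hbi : m ≤ b - i) (hri : m ≤ r - i) :
    (p : ℤ) ^ t ∣ ((b - i).choose m : ℤ) - ((r - i).choose m : ℤ) :=
  stmt9_general p b s t r i m hp hr hm hib
end

section
/- Let p be an odd prime and h(z) = −(z^{p−1} − 1)^m (z^{r−mp} − z^{b−m}) ∈ F_p[z], with r ≡ b (mod p−1) and exponents nonnegative. Then for every λ ∈ F_p^× and every 0 ≤ j ≤ m, the j-th formal derivative h^{(j)}(λ) = 0. -/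
/-!
Every `λ ∈ 𝔽_p^×` is a root of `z^{p-1} - 1`, and, since `λ^{p-1} = 1` and
`r - mp ≡ b - m (mod p-1)`, also of `z^{r-mp} - z^{b-m}`. Hence `(z - λ)^{m+1}` divides `h`,
so `(z - λ)^{m+1-j}` divides `h^{(j)}`, which therefore vanishes at `λ` for `j ≤ m`.
-/

open Polynomial

namespace Polynomial

variable {R : Type*} [CommRing R]

theorem isRoot_iterate_derivative_of_pow_succ_dvd {f : R[X]} {a : R} {n j : ℕ}
    (hdvd : (X - C a) ^ (n + 1) ∣ f) (hj : j ≤ n) : (derivative^[j] f).IsRoot a :=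
  dvd_iff_isRoot.mp <| (dvd_pow_self _ (by omega)).trans
    (pow_sub_dvd_iterate_derivative_of_pow_dvd j hdvd)

theorem pow_succ_dvd_pow_mul_of_isRoot {f g : R[X]} {a : R} (hf : f.IsRoot a) (hg : g.IsRoot a)
    (n : ℕ) : (X - C a) ^ (n + 1) ∣ f ^ n * g := by
  rw [pow_succ]
  exact mul_dvd_mul (pow_dvd_pow_of_dvd (dvd_iff_isRoot.mpr hf) n) (dvd_iff_isRoot.mpr hg)

end Polynomial

theorem Nat.sub_mul_modEq_sub_of_modEq {p r b m : ℕ} (hp : 0 < p) (h : b ≡ r [MOD p - 1])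
    (hr : m * p ≤ r) (hb : m ≤ b) : r - m * p ≡ b - m [MOD p - 1] := by
  rw [Nat.modEq_iff_dvd] at h ⊢
  have hsplit : ((b - m : ℕ) : ℤ) - (r - m * p : ℕ) = -(r - b) + m * (p - 1 : ℕ) := by
    push_cast [Nat.cast_sub hr, Nat.cast_sub hb, Nat.cast_sub hp]
    ring
  rw [hsplit]
  exact h.neg_right.add (dvd_mul_left _ _)

theorem stmt15_general (p r b m : ℕ) (hp : p.Prime)
    (hdvd : (p - 1) ∣ r - b) (hbr : b ≤ r) (hr : m * p ≤ r) (hb : m ≤ b) :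
    ∀ lam : ZMod p, lam ≠ 0 → ∀ j ≤ m,
      (Polynomial.derivative^[j]
        (-(((Polynomial.X : Polynomial (ZMod p)) ^ (p - 1) - 1) ^ m *
            (Polynomial.X ^ (r - m * p) - Polynomial.X ^ (b - m))))).eval lam = 0 := by
  intro lam hlam j hj
  have : Fact p.Prime := ⟨hp⟩
  have hpow : lam ^ (p - 1) = 1 := ZMod.pow_card_sub_one_eq_one hlam
  have hexp : r - m * p ≡ b - m [MOD p - 1] :=
    Nat.sub_mul_modEq_sub_of_modEq hp.pos ((Nat.modEq_iff_dvd' hbr).mpr hdvd) hr hb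
  have hroot₁ : (X ^ (p - 1) - 1 : (ZMod p)[X]).IsRoot lam := by simp [hpow]
  have hroot₂ : (X ^ (r - m * p) - X ^ (b - m) : (ZMod p)[X]).IsRoot lam := by
    simp [pow_eq_pow_of_modEq hexp hpow]
  exact isRoot_iterate_derivative_of_pow_succ_dvd
    (dvd_neg.mpr (pow_succ_dvd_pow_mul_of_isRoot hroot₁ hroot₂ m)) hj

/-- For `h(z) = -(z^{p-1} - 1)^m (z^{r-mp} - z^{b-m}) ∈ F_p[z]`
with `r ≡ b (mod p-1)`, `r ≥ mp`, `b ≥ m`, all formal derivatives of order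
`≤ m` vanish at every `λ ∈ F_p^×`. -/
theorem stmt15 (p r b m : ℕ) (hp : p.Prime) (hodd : Odd p)
    (hdvd : (p - 1) ∣ r - b) (hbr : b ≤ r) (hr : m * p ≤ r) (hb : m ≤ b) :
    ∀ lam : ZMod p, lam ≠ 0 → ∀ j ≤ m,
      (Polynomial.derivative^[j]
        (-(((Polynomial.X : Polynomial (ZMod p)) ^ (p - 1) - 1) ^ m *
            (Polynomial.X ^ (r - m * p) - Polynomial.X ^ (b - m))))).eval lam = 0 :=
  stmt15_general p r b m hp hdvd hbr hr hb
end
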